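/- Let Ω ⊆ ℝ³ be a helical domain with cross-section D = {(x₁,x₂) : (x₁,x₂,0) ∈ Ω} simply-connected, bounded and smooth, let v be a C¹ helical, divergence-free vector field on Ω with v·n = 0 on ∂Ω, and let φ : D → ℝ be the stream function of the orthogonal part u = v − v_ξ ξ/|ξ|² (i.e. φ = 0 on ∂D and (u₁,u₂)(x₁,x₂,0) = |ξ|⁻² ((−x₁x₂, h²+x₁²), (−(h²+x₂²), x₁x₂)) ∇φ(x₁,x₂)). Then for every helical C¹ scalar function g on Ω and every (x₁,x₂) ∈ D, (v·∇g)(x₁,x₂,0) = ∇⊥φ(x₁,x₂)·∇g(x₁,x₂,0), where ∇⊥φ = (∂_{x₂}φ, −∂_{x₁}φ). -/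

import Mathlib

/-!
A helical scalar `g` is constant along the orbits `θ ↦ H_θ x`, whose velocity at `θ = 0` is
`ξ(x)`; hence `ξ ⋅ ∇g = 0`. So `v ⋅ ∇g = u ⋅ ∇g`, where both `u` and `∇g` are orthogonal to `ξ`.
Since `ξ₃ = h ≠ 0`, such vectors are determined by their first two components, and inverting the
matrix `|ξ|⁻² ((−x₁x₂, h²+x₁²), (−(h²+x₂²), x₁x₂))` (determinant `h² / |ξ|²`) turns `u ⋅ ∇g`
into `∇⊥φ ⋅ ∇g`.
-/

noncomputable section

open Real

/-- ℝ³ as functions `Fin 3 → ℝ`. -/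
abbrev V3 := Fin 3 → ℝ

/-- ℝ² as functions `Fin 2 → ℝ`. -/
abbrev V2 := Fin 2 → ℝ

/-- Partial derivative `∂_{x_i} f` of a scalar function on ℝ³. -/
def pd3 (i : Fin 3) (f : V3 → ℝ) (x : V3) : ℝ := fderiv ℝ f x (Pi.single i 1)

/-- Partial derivative `∂_{x_i} f` of a scalar function on ℝ². -/
def pd2 (i : Fin 2) (f : V2 → ℝ) (x : V2) : ℝ := fderiv ℝ f x (Pi.single i 1)

/-- Embedding of the cross-section plane: `(x₁,x₂) ↦ (x₁,x₂,0)`. -/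
def emb (p : V2) : V3 := ![p 0, p 1, 0]

/-- The helical transformation `H_θ(x) = Q_θ x + (0,0,hθ)`. -/
def Hmap (h θ : ℝ) (x : V3) : V3 :=
  ![x 0 * Real.cos θ + x 1 * Real.sin θ,
    -(x 0) * Real.sin θ + x 1 * Real.cos θ,
    x 2 + h * θ]

/-- The rotation `Q_θ = diag(R_θ, 1)` acting on vectors of ℝ³. -/
def Qrot (θ : ℝ) (v : V3) : V3 :=
  ![v 0 * Real.cos θ + v 1 * Real.sin θ,
    -(v 0) * Real.sin θ + v 1 * Real.cos θ,
    v 2]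

/-- The vector field `ξ(x) = (x₂, −x₁, h)`. -/
def xiVec (h : ℝ) (x : V3) : V3 := ![x 1, -(x 0), h]

/-- `|ξ(x)|² = h² + x₁² + x₂²`. -/
def xiNormSq (h : ℝ) (x : V3) : ℝ := h ^ 2 + (x 0) ^ 2 + (x 1) ^ 2

/-- The helical swirl `v_ξ = v ⋅ ξ`. -/
def swirl (h : ℝ) (v : V3 → V3) (x : V3) : ℝ := ∑ i : Fin 3, v x i * xiVec h x i

/-- The orthogonal part `u = v − v_ξ ξ / |ξ|²` of a vector field `v`. -/
def orthPart (h : ℝ) (v : V3 → V3) (x : V3) : V3 :=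
  fun i => v x i - swirl h v x * xiVec h x i / xiNormSq h x

/-- `n` is an outward normal vector of `Ω` at the boundary point `x`. -/
def IsOutwardNormal (Ω : Set V3) (x n : V3) : Prop :=
  ∃ ε > (0 : ℝ), (∀ t ∈ Set.Ioo (0 : ℝ) ε, x + t • n ∉ closure Ω) ∧
    (∀ t ∈ Set.Ioo (0 : ℝ) ε, x - t • n ∈ Ω)

lemma fderiv_apply_eq_zero_of_comp_eq_const {E F : Type*} [NormedAddCommGroup E] [NormedSpace ℝ E]
    [NormedAddCommGroup F] [NormedSpace ℝ F] {g : E → F} {γ : ℝ → E} {w : E} {t : ℝ}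
    (hg : DifferentiableAt ℝ g (γ t)) (hγ : HasDerivAt γ w t) (hconst : ∀ s, g (γ s) = g (γ t)) :
    fderiv ℝ g (γ t) w = 0 := by
  have hcomp := hg.hasFDerivAt.comp_hasDerivAt t hγ
  rw [show g ∘ γ = fun _ => g (γ t) from funext hconst] at hcomp
  exact hcomp.unique (hasDerivAt_const t _)

lemma fderiv_apply_eq_sum_pd3 (g : V3 → ℝ) (x w : V3) :
    fderiv ℝ g x w = ∑ i, w i * pd3 i g x := by
  conv_lhs => rw [← Finset.univ_sum_single w]
  simp only [map_sum, pd3]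
  refine Finset.sum_congr rfl fun i _ => ?_
  rw [← smul_eq_mul, ← map_smul, ← Pi.single_smul', smul_eq_mul, mul_one]

lemma Hmap_zero (h : ℝ) (x : V3) : Hmap h 0 x = x := by
  ext i; fin_cases i <;> simp [Hmap]

lemma hasDerivAt_Hmap (h : ℝ) (x : V3) : HasDerivAt (fun θ => Hmap h θ x) (xiVec h x) 0 := by
  rw [hasDerivAt_pi]
  intro i
  fin_cases i
  · simpa [Hmap, xiVec] using
      ((hasDerivAt_cos 0).const_mul (x 0)).fun_add ((hasDerivAt_sin 0).const_mul (x 1))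
  · simpa [Hmap, xiVec] using
      ((hasDerivAt_sin 0).const_mul (-x 0)).fun_add ((hasDerivAt_cos 0).const_mul (x 1))
  · simpa [Hmap, xiVec] using ((hasDerivAt_id (0 : ℝ)).const_mul h).const_add (x 2)

lemma sum_pd3_mul_xiVec_eq_zero_of_helical {h : ℝ} {g : V3 → ℝ} {x : V3}
    (hg : DifferentiableAt ℝ g x) (hhel : ∀ θ, g (Hmap h θ x) = g x) :
    ∑ i, xiVec h x i * pd3 i g x = 0 := by
  have hg₀ : DifferentiableAt ℝ g (Hmap h 0 x) := by rwa [Hmap_zero]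
  have := fderiv_apply_eq_zero_of_comp_eq_const hg₀ (hasDerivAt_Hmap h x)
    fun θ => by rw [hhel, Hmap_zero]
  rwa [Hmap_zero, fderiv_apply_eq_sum_pd3] at this

lemma sum_mul_eq_sum_orthPart_mul {h : ℝ} (v : V3 → V3) {x w : V3}
    (hw : ∑ i, xiVec h x i * w i = 0) :
    ∑ i, v x i * w i = ∑ i, orthPart h v x i * w i := by
  simp only [orthPart, sub_mul, Finset.sum_sub_distrib]
  have hpull : ∑ i, swirl h v x * xiVec h x i / xiNormSq h x * w i
      = swirl h v x / xiNormSq h x * ∑ i, xiVec h x i * w i := by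
    rw [Finset.mul_sum]; exact Finset.sum_congr rfl fun i _ => by ring
  rw [hpull, hw, mul_zero, sub_zero]

lemma xiNormSq_ne_zero {h : ℝ} (hh : h ≠ 0) (x : V3) : xiNormSq h x ≠ 0 := by
  unfold xiNormSq; positivity

lemma swirl_orthPart {h : ℝ} (v : V3 → V3) {x : V3} (hx : xiNormSq h x ≠ 0) :
    swirl h (orthPart h v) x = 0 := by
  simp only [swirl, orthPart, Fin.sum_univ_three, xiNormSq, xiVec, Matrix.cons_val_zero,
    Matrix.cons_val_one, Matrix.cons_val_two, Matrix.head_cons, Matrix.tail_cons] at hx ⊢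
  field_simp
  ring

lemma sum_mul_eq_of_orth_xiVec {h : ℝ} (hh : h ≠ 0) {p : V2} {u G : V3} {f₀ f₁ : ℝ}
    (hu : ∑ i, u i * xiVec h (emb p) i = 0) (hG : ∑ i, xiVec h (emb p) i * G i = 0)
    (hu₀ : u 0 = (-(p 0 * p 1) * f₀ + (h ^ 2 + p 0 ^ 2) * f₁) / (h ^ 2 + p 0 ^ 2 + p 1 ^ 2))
    (hu₁ : u 1 = (-(h ^ 2 + p 1 ^ 2) * f₀ + p 0 * p 1 * f₁) / (h ^ 2 + p 0 ^ 2 + p 1 ^ 2)) :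
    ∑ i, u i * G i = f₁ * G 0 - f₀ * G 1 := by
  have hS : h ^ 2 + p 0 ^ 2 + p 1 ^ 2 ≠ 0 := xiNormSq_ne_zero hh (emb p)
  simp only [Fin.sum_univ_three, xiVec, emb] at hu hG ⊢
  simp only [Matrix.cons_val_zero, Matrix.cons_val_one, Matrix.cons_val_two, Matrix.head_cons,
    Matrix.tail_cons] at hu hG
  field_simp at hu₀ hu₁
  apply mul_left_cancel₀ (mul_ne_zero hS (pow_ne_zero 2 hh))
  linear_combination ((h ^ 2 + p 1 ^ 2) * G 0 - p 0 * p 1 * G 1) * hu₀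
    + ((h ^ 2 + p 0 ^ 2) * G 1 - p 0 * p 1 * G 0) * hu₁
    + (h ^ 2 + p 0 ^ 2 + p 1 ^ 2) * (h * G 2 * hu - (u 0 * p 1 - u 1 * p 0) * hG)

theorem transport_via_stream_function_general (h : ℝ) (hh : 0 < h)
    (Ω : Set V3) (hΩopen : IsOpen Ω)
    (D : Set V2) (hD : D = {p : V2 | emb p ∈ Ω})
    (v : V3 → V3)
    (φ : V2 → ℝ)
    (hφ : ∀ p ∈ D,
      orthPart h v (emb p) 0 =
        (-(p 0 * p 1) * pd2 0 φ p + (h ^ 2 + (p 0) ^ 2) * pd2 1 φ p) /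
          (h ^ 2 + (p 0) ^ 2 + (p 1) ^ 2) ∧
      orthPart h v (emb p) 1 =
        (-(h ^ 2 + (p 1) ^ 2) * pd2 0 φ p + p 0 * p 1 * pd2 1 φ p) /
          (h ^ 2 + (p 0) ^ 2 + (p 1) ^ 2))
    (g : V3 → ℝ) (hg : ContDiffOn ℝ 1 g Ω)
    (hghel : ∀ θ : ℝ, ∀ x ∈ Ω, g (Hmap h θ x) = g x) :
    ∀ p ∈ D,
      ∑ i : Fin 3, v (emb p) i * pd3 i g (emb p) =
        pd2 1 φ p * pd3 0 g (emb p) - pd2 0 φ p * pd3 1 g (emb p) := by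
  intro p hp
  have hx : emb p ∈ Ω := by rwa [hD] at hp
  have hgx : DifferentiableAt ℝ g (emb p) :=
    ((hg _ hx).differentiableWithinAt one_ne_zero).differentiableAt (hΩopen.mem_nhds hx)
  have hξg := sum_pd3_mul_xiVec_eq_zero_of_helical hgx fun θ => hghel θ _ hx
  rw [sum_mul_eq_sum_orthPart_mul v hξg]
  exact sum_mul_eq_of_orth_xiVec hh.ne' (swirl_orthPart v (xiNormSq_ne_zero hh.ne' _)) hξg
    (hφ p hp).1 (hφ p hp).2

/-- For a helical divergence-free tangent field `v` with stream function `φ`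
of its orthogonal part, and any helical C¹ scalar `g`,
`(v ⋅ ∇g)(x₁,x₂,0) = ∇⊥φ ⋅ ∇g(x₁,x₂,0)` on the cross-section `D`. -/
theorem transport_via_stream_function (h : ℝ) (hh : 0 < h)
    (Ω : Set V3) (hΩopen : IsOpen Ω) (hΩ : ∀ θ : ℝ, Hmap h θ '' Ω = Ω)
    (D : Set V2) (hD : D = {p : V2 | emb p ∈ Ω})
    (hDconn : IsConnected D) (hDsc : SimplyConnectedSpace D)
    (hDbdd : Bornology.IsBounded D)
    (v : V3 → V3) (hv : ∀ i : Fin 3, ContDiffOn ℝ 1 (fun x => v x i) Ω)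
    (hhel : ∀ θ : ℝ, ∀ x ∈ Ω, v (Hmap h θ x) = Qrot θ (v x))
    (hdiv : ∀ x ∈ Ω, ∑ i : Fin 3, pd3 i (fun y => v y i) x = 0)
    (hbc : ∀ x ∈ frontier Ω, ∀ n : V3, IsOutwardNormal Ω x n →
      ∑ i : Fin 3, v x i * n i = 0)
    (φ : V2 → ℝ) (hφ0 : ∀ p ∈ frontier D, φ p = 0)
    (hφ : ∀ p ∈ D,
      orthPart h v (emb p) 0 =
        (-(p 0 * p 1) * pd2 0 φ p + (h ^ 2 + (p 0) ^ 2) * pd2 1 φ p) /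
          (h ^ 2 + (p 0) ^ 2 + (p 1) ^ 2) ∧
      orthPart h v (emb p) 1 =
        (-(h ^ 2 + (p 1) ^ 2) * pd2 0 φ p + p 0 * p 1 * pd2 1 φ p) /
          (h ^ 2 + (p 0) ^ 2 + (p 1) ^ 2))
    (g : V3 → ℝ) (hg : ContDiffOn ℝ 1 g Ω)
    (hghel : ∀ θ : ℝ, ∀ x ∈ Ω, g (Hmap h θ x) = g x) :
    ∀ p ∈ D,
      ∑ i : Fin 3, v (emb p) i * pd3 i g (emb p) =
        pd2 1 φ p * pd3 0 g (emb p) - pd2 0 φ p * pd3 1 g (emb p) :=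
  transport_via_stream_function_general h hh Ω hΩopen D hD v φ hφ g hg hghel
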